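/- (Additional conditions for zero in-plane error.) Let G : E → E map into X and let G⊥ : E → E map into Xᗮ, and suppose the map Ḡ : E → E satisfies the decomposition Ḡ(y) = G(P y) + G⊥(y) for all y ∈ E. Suppose further that Ḡ satisfies the projected Lipschitz condition: there exists a real constant L with L < 1 such that ‖P(Ḡ(w₁)) − P(Ḡ(w₂))‖ ≤ L · ‖P w₁ − P w₂‖ for all w₁, w₂ ∈ E. If y⋆ ∈ E satisfies y⋆ = G(y⋆) and ȳ⋆ ∈ E satisfies ȳ⋆ = Ḡ(ȳ⋆), then y⋆ = P ȳ⋆; in other words, the in-plane error is zero. -/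

import Mathlib

/-!
Since `G` maps into `X` and `G⊥` into `Xᗮ`, projecting the decomposition gives `P ∘ Ḡ = G ∘ P`.
Hence `P ȳ⋆` is a fixed point of `G`, as is `y⋆ ∈ X`, and the projected Lipschitz condition at
`y⋆, ȳ⋆` reads `‖y⋆ - P ȳ⋆‖ ≤ L ‖y⋆ - P ȳ⋆‖`, which forces equality because `L < 1`.
-/

theorem eq_of_norm_sub_le_mul_norm_sub {E : Type*} [NormedAddGroup E] {a b : E} {L : ℝ}
    (hL : L < 1) (h : ‖a - b‖ ≤ L * ‖a - b‖) : a = b := by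
  have : ‖a - b‖ ≤ 0 := by nlinarith [norm_nonneg (a - b)]
  exact sub_eq_zero.mp (norm_le_zero_iff.mp this)

namespace Submodule

variable {𝕜 E : Type*} [RCLike 𝕜] [NormedAddCommGroup E] [InnerProductSpace 𝕜 E]
  {K : Submodule 𝕜 E} [K.HasOrthogonalProjection]

theorem starProjection_add_of_mem_of_mem_orthogonal {u v : E} (hu : u ∈ K) (hv : v ∈ Kᗮ) :
    K.starProjection (u + v) = u := by
  rw [map_add, starProjection_eq_self_iff.mpr hu, (starProjection_apply_eq_zero_iff K).mpr hv,
    add_zero]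

end Submodule

/-- Additional conditions for zero in-plane error: under the decomposition
`Gbar y = G (P y) + Gperp y` and the projected Lipschitz condition with
constant `L < 1`, a fixed point `ystar` of `G` equals the projection of any
fixed point `ybar` of `Gbar`. -/
theorem zero_in_plane_error_additional
    {E : Type*} [NormedAddCommGroup E] [InnerProductSpace ℝ E]
    (X : Submodule ℝ E) [CompleteSpace X]
    (G Gperp Gbar : E → E)
    (hG : ∀ y : E, G y ∈ X)
    (hGperp : ∀ y : E, Gperp y ∈ Xᗮ)
    (hdecomp : ∀ y : E, Gbar y = G ((Submodule.orthogonalProjectionOnto X y : E)) + Gperp y)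
    (L : ℝ) (hL : L < 1)
    (hLip : ∀ w₁ w₂ : E,
      ‖(Submodule.orthogonalProjectionOnto X (Gbar w₁) : E) -
        (Submodule.orthogonalProjectionOnto X (Gbar w₂) : E)‖ ≤
      L * ‖(Submodule.orthogonalProjectionOnto X w₁ : E) -
        (Submodule.orthogonalProjectionOnto X w₂ : E)‖)
    (ystar : E) (hfix : ystar = G ystar)
    (ybar : E) (hfixbar : ybar = Gbar ybar) :
    ystar = (Submodule.orthogonalProjectionOnto X ybar : E) := by
  simp only [Submodule.coe_orthogonalProjectionOnto_apply] at hdecomp hLip ⊢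
  have hPGbar (y : E) : X.starProjection (Gbar y) = G (X.starProjection y) := by
    rw [hdecomp]
    exact Submodule.starProjection_add_of_mem_of_mem_orthogonal (hG _) (hGperp y)
  have hPystar : X.starProjection ystar = ystar :=
    Submodule.starProjection_eq_self_iff.mpr (hfix ▸ hG ystar)
  have hPybar : G (X.starProjection ybar) = X.starProjection ybar := by
    rw [← hPGbar, ← hfixbar]
  refine eq_of_norm_sub_le_mul_norm_sub hL ?_
  have key := hLip ystar ybar
  rwa [hPGbar, hPGbar, hPybar, hPystar, ← hfix] at key
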